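/- Let λ, c > 0, 0 < p, q with p+q < 1, K = λ(1-p-q)/c, and define g(x,t) = (e^{-λt}/(4c))·[λ(1-p-q)·I₀(K√(c²t²-x²)) + (∂/∂t)I₀(K√(c²t²-x²))] for |x| < ct. Then ∫_{-ct}^{ct} g(x,t) dx = (e^{-λ(p+q)t} - e^{-λt})/2. -/

import Mathlib

open Set MeasureTheory intervalIntegral

/-- The modified Bessel function of the first kind of order zero. -/
noncomputable def besselI0 (z : ℝ) : ℝ :=
  ∑' k : ℕ, (z / 2) ^ (2 * k) / ((Nat.factorial k : ℝ)) ^ 2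

lemma fact_le_sq (k : ℕ) : ((Nat.factorial k : ℝ)) ≤ ((Nat.factorial k : ℝ)) ^ 2 := by
  exact_mod_cast Nat.le_self_pow two_ne_zero _

lemma fact_pos' (k : ℕ) : (0:ℝ) < (Nat.factorial k : ℝ) := by
  exact_mod_cast Nat.factorial_pos k

lemma summable0 (B : ℝ) (hB : 0 ≤ B) :
    Summable (fun k : ℕ => B ^ k / ((Nat.factorial k : ℝ)) ^ 2) := by
  refine Summable.of_nonneg_of_le (fun k => by positivity)
    (fun k => ?_) (Real.summable_pow_div_factorial B)
  exact div_le_div_of_nonneg_left (pow_nonneg hB k) (fact_pos' k) (fact_le_sq k)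

lemma summable1 (B : ℝ) (hB : 0 ≤ B) :
    Summable (fun k : ℕ => (k : ℝ) * B ^ k / ((Nat.factorial k : ℝ)) ^ 2) := by
  refine Summable.of_nonneg_of_le (fun k => by positivity)
    (fun k => ?_) (Real.summable_pow_div_factorial (2 * B))
  have h1 : (k : ℝ) ≤ 2 ^ k := by exact_mod_cast (Nat.lt_two_pow_self).le
  calc (k : ℝ) * B ^ k / ((Nat.factorial k : ℝ)) ^ 2
      ≤ 2 ^ k * B ^ k / (Nat.factorial k : ℝ) := by
        refine div_le_div₀ (by positivity) ?_ (fact_pos' k) (fact_le_sq k)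
        exact mul_le_mul_of_nonneg_right h1 (pow_nonneg hB k)
    _ = (2 * B) ^ k / (Nat.factorial k : ℝ) := by rw [mul_pow]

lemma summable2 (r v C : ℝ) (hr : 0 ≤ r) (hv : 0 ≤ v) :
    Summable (fun k : ℕ => r ^ k * ((k : ℝ) * v ^ (k - 1) * C) / ((Nat.factorial k : ℝ)) ^ 2) := by
  refine Summable.of_norm_bounded
    (g := fun k => |C| * ((k : ℝ) * (r * (v + 1)) ^ k / ((Nat.factorial k : ℝ)) ^ 2))
    ((summable1 (r * (v + 1)) (by positivity)).mul_left _) (fun k => ?_)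
  have hvv : v ^ (k - 1) ≤ (v + 1) ^ k :=
    le_trans (pow_le_pow_left₀ hv (by linarith) _) (pow_le_pow_right₀ (by linarith) (Nat.sub_le k 1))
  have h1 : ‖r ^ k * ((k : ℝ) * v ^ (k - 1) * C) / ((Nat.factorial k : ℝ)) ^ 2‖
      = r ^ k * ((k : ℝ) * v ^ (k - 1) * |C|) / ((Nat.factorial k : ℝ)) ^ 2 := by
    rw [Real.norm_eq_abs, abs_div, abs_mul, abs_mul, abs_mul,
      abs_of_nonneg (pow_nonneg hr k), abs_of_nonneg (Nat.cast_nonneg k),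
      abs_of_nonneg (pow_nonneg hv _), abs_of_nonneg (by positivity : (0:ℝ) ≤ ((Nat.factorial k : ℝ)) ^ 2)]
  rw [h1]
  have h2 : |C| * ((k : ℝ) * (r * (v + 1)) ^ k / ((Nat.factorial k : ℝ)) ^ 2)
      = r ^ k * ((k : ℝ) * (v + 1) ^ k * |C|) / ((Nat.factorial k : ℝ)) ^ 2 := by
    rw [mul_pow]; ring
  show _ ≤ |C| * ((k : ℝ) * (r * (v + 1)) ^ k / ((Nat.factorial k : ℝ)) ^ 2)
  rw [h2]
  gcongr

lemma besselI0_sqrt (K u : ℝ) (hu : 0 ≤ u) :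
    besselI0 (K * Real.sqrt u) = ∑' k : ℕ, (K ^ 2 / 4) ^ k * u ^ k / ((Nat.factorial k : ℝ)) ^ 2 := by
  unfold besselI0
  congr 1
  funext k
  congr 1
  rw [pow_mul, ← mul_pow]
  congr 1
  rw [div_pow, mul_pow, Real.sq_sqrt hu]
  ring

lemma prod_wallis (n : ℕ) :
    ∏ i ∈ Finset.range n, (2 * (i : ℝ) + 2) / (2 * i + 3)
      = 4 ^ n * ((Nat.factorial n : ℝ)) ^ 2 / (Nat.factorial (2 * n + 1) : ℝ) := by
  induction n with
  | zero => simp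
  | succ m ih =>
    rw [Finset.prod_range_succ, ih]
    have h1 : Nat.factorial (m + 1) = (m + 1) * Nat.factorial m := rfl
    have h2 : 2 * (m + 1) + 1 = (2 * m + 3) := by ring
    have h3 : Nat.factorial (2 * m + 3) = (2 * m + 3) * ((2 * m + 2) * Nat.factorial (2 * m + 1)) := by
      rw [show 2 * m + 3 = (2 * m + 2) + 1 from rfl, Nat.factorial_succ,
        show 2 * m + 2 = (2 * m + 1) + 1 from rfl, Nat.factorial_succ]
    rw [h1, h2, h3]
    push_cast
    have hf : (0:ℝ) < (Nat.factorial (2 * m + 1) : ℝ) := fact_pos' _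
    have hf2 : (0:ℝ) < (Nat.factorial m : ℝ) := fact_pos' _
    field_simp
    ring

lemma integral_one_sub_sq_pow (n : ℕ) :
    ∫ x in (-1:ℝ)..1, (1 - x ^ 2) ^ n
      = 2 * 4 ^ n * ((Nat.factorial n : ℝ)) ^ 2 / (Nat.factorial (2 * n + 1) : ℝ) := by
  have key : ∫ θ in (0:ℝ)..Real.pi,
        Real.sin θ • ((fun x : ℝ => (1 - x ^ 2) ^ n) ∘ (fun θ => -Real.cos θ)) θ
      = ∫ x in (-Real.cos 0)..(-Real.cos Real.pi), (1 - x ^ 2) ^ n := by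
    apply integral_comp_smul_deriv
    · intro x _
      have := (Real.hasDerivAt_cos x).neg; rwa [neg_neg] at this
    · exact Real.continuous_sin.continuousOn
    · continuity
  simp only [Real.cos_zero, Real.cos_pi, neg_neg] at key
  rw [← key]
  have heq : ∀ θ : ℝ, Real.sin θ • ((fun x : ℝ => (1 - x ^ 2) ^ n) ∘ (fun θ => -Real.cos θ)) θ
      = Real.sin θ ^ (2 * n + 1) := by
    intro θ
    have h : (1:ℝ) - (-Real.cos θ) ^ 2 = Real.sin θ ^ 2 := by
      rw [neg_sq, Real.sin_sq]
    simp only [Function.comp, smul_eq_mul, h]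
    ring
  simp_rw [heq]
  rw [integral_sin_pow_odd, prod_wallis]
  ring

lemma integral_sq_sub_sq_pow (b : ℝ) (hb : 0 < b) (n : ℕ) :
    ∫ x in (-b)..b, (b ^ 2 - x ^ 2) ^ n
      = b ^ (2 * n + 1) *
          (2 * 4 ^ n * ((Nat.factorial n : ℝ)) ^ 2 / (Nat.factorial (2 * n + 1) : ℝ)) := by
  have hb' : b ≠ 0 := ne_of_gt hb
  have h1 : ∀ x : ℝ, (b ^ 2 - x ^ 2) ^ n = b ^ (2 * n) * (1 - (x / b) ^ 2) ^ n := by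
    intro x
    rw [pow_mul, ← mul_pow]
    congr 1
    field_simp
  simp_rw [h1]
  rw [intervalIntegral.integral_const_mul]
  have h2 := intervalIntegral.integral_comp_div (a := -b) (b := b) (c := b)
    (f := fun u : ℝ => (1 - u ^ 2) ^ n) hb'
  rw [h2]
  simp only [neg_div, div_self hb', smul_eq_mul]
  rw [integral_one_sub_sq_pow]
  have hb2 : b ^ (2 * n + 1) = b ^ (2 * n) * b := pow_succ b (2 * n)
  rw [hb2]
  ring

lemma deriv_bessel (K c t x : ℝ) (hc : 0 < c) (ht : 0 < t) (hx : |x| < c * t) :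
    HasDerivAt (fun σ => besselI0 (K * Real.sqrt (c ^ 2 * σ ^ 2 - x ^ 2)))
      (∑' k : ℕ, (K ^ 2 / 4) ^ k *
          ((k : ℝ) * (c ^ 2 * t ^ 2 - x ^ 2) ^ (k - 1) * (2 * c ^ 2 * t)) /
          ((Nat.factorial k : ℝ)) ^ 2) t := by
  set r := K ^ 2 / 4 with hr
  have hr0 : 0 ≤ r := by positivity
  set s : Set ℝ := Ioo (|x| / c) (2 * t) with hs
  have hts : t ∈ s := ⟨(div_lt_iff₀ hc).2 (by linarith [hx]), by linarith⟩
  have hso : IsOpen s := isOpen_Ioo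
  have hsc : IsPreconnected s := isPreconnected_Ioo
  have hpos : ∀ σ ∈ s, 0 ≤ c ^ 2 * σ ^ 2 - x ^ 2 := by
    intro σ hσ
    have h1 : |x| < c * σ := by have := (div_lt_iff₀ hc).1 hσ.1; linarith
    have h2 : x ^ 2 < (c * σ) ^ 2 :=
      sq_lt_sq' (by linarith [abs_nonneg x, neg_abs_le x]) (lt_of_le_of_lt (le_abs_self x) h1)
    nlinarith
  have hub : ∀ σ ∈ s, c ^ 2 * σ ^ 2 - x ^ 2 ≤ 4 * c ^ 2 * t ^ 2 := by
    intro σ hσ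
    have h0 : 0 ≤ σ := le_trans (div_nonneg (abs_nonneg x) hc.le) hσ.1.le
    have h2 : σ < 2 * t := hσ.2
    have h3 : σ ^ 2 ≤ (2 * t) ^ 2 := by nlinarith
    nlinarith [mul_le_mul_of_nonneg_left h3 (sq_nonneg c), sq_nonneg x]
  have hσb : ∀ σ ∈ s, 0 ≤ 2 * c ^ 2 * σ ∧ 2 * c ^ 2 * σ ≤ 4 * c ^ 2 * t := by
    intro σ hσ
    have h0 : 0 ≤ σ := le_trans (div_nonneg (abs_nonneg x) hc.le) hσ.1.le
    constructor
    · positivity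
    · nlinarith [hσ.2]
  set g : ℕ → ℝ → ℝ :=
    fun k σ => r ^ k * (c ^ 2 * σ ^ 2 - x ^ 2) ^ k / ((Nat.factorial k : ℝ)) ^ 2 with hg
  set g' : ℕ → ℝ → ℝ := fun k σ =>
    r ^ k * ((k : ℝ) * (c ^ 2 * σ ^ 2 - x ^ 2) ^ (k - 1) * (2 * c ^ 2 * σ)) /
      ((Nat.factorial k : ℝ)) ^ 2 with hg'
  have hder : ∀ k σ, HasDerivAt (g k) (g' k σ) σ := by
    intro k σ
    have hin : HasDerivAt (fun σ : ℝ => c ^ 2 * σ ^ 2 - x ^ 2) (2 * c ^ 2 * σ) σ := by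
      have := ((hasDerivAt_pow 2 σ).const_mul (c ^ 2)).sub_const (x ^ 2)
      exact this.congr_deriv (by rw [Nat.cast_ofNat, show 2 - 1 = 1 from rfl, pow_one]; ring)
    have := ((hin.pow k).const_mul (r ^ k)).div_const ((Nat.factorial k : ℝ) ^ 2)
    exact this
  set u : ℕ → ℝ :=
    fun k => (1 / t) * ((k : ℝ) * (K ^ 2 * c ^ 2 * t ^ 2) ^ k / ((Nat.factorial k : ℝ)) ^ 2) with hu
  have hsum_u : Summable u := (summable1 (K ^ 2 * c ^ 2 * t ^ 2) (by positivity)).mul_left _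
  have hbound : ∀ k, ∀ σ ∈ s, ‖g' k σ‖ ≤ u k := by
    intro k σ hσ
    obtain ⟨e3, e4⟩ := hσb σ hσ
    have e1 := hpos σ hσ
    have e2 := hub σ hσ
    have hnn : 0 ≤ g' k σ := by
      simp only [hg']
      positivity
    rw [Real.norm_of_nonneg hnn]
    cases k with
    | zero => simp [hg', hu]
    | succ m =>
      simp only [hg', hu]
      have step1 : r ^ (m+1) * ((m+1 : ℕ) * (c ^ 2 * σ ^ 2 - x ^ 2) ^ (m + 1 - 1) * (2 * c ^ 2 * σ)) /
            ((Nat.factorial (m+1) : ℝ)) ^ 2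
          ≤ r ^ (m+1) * ((m+1 : ℕ) * (4 * c ^ 2 * t ^ 2) ^ m * (4 * c ^ 2 * t)) /
            ((Nat.factorial (m+1) : ℝ)) ^ 2 := by
        simp only [Nat.add_sub_cancel]
        gcongr
      refine le_trans step1 (le_of_eq ?_)
      have hfact : (0:ℝ) < ((Nat.factorial (m+1) : ℝ)) ^ 2 := by positivity
      rw [hr]
      push_cast
      rw [mul_pow, mul_pow, mul_pow, div_pow]
      field_simp
      ring
  have hsum0 : Summable (fun k => g k t) := by
    refine (summable0 (r * (c ^ 2 * t ^ 2 - x ^ 2)) ?_).congr fun k => ?_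
    · have := hpos t hts
      positivity
    · simp only [hg, mul_pow]
  have key : HasDerivAt (fun σ => ∑' k, g k σ) (∑' k, g' k t) t :=
    hasDerivAt_tsum_of_isPreconnected hsum_u hso hsc (fun k σ _ => hder k σ)
      (fun k σ hσ => hbound k σ hσ) hts hsum0 hts
  have heq : (fun σ => besselI0 (K * Real.sqrt (c ^ 2 * σ ^ 2 - x ^ 2)))
      =ᶠ[nhds t] (fun σ => ∑' k, g k σ) := by
    filter_upwards [hso.mem_nhds hts] with σ hσ
    rw [besselI0_sqrt K _ (hpos σ hσ)]
  exact key.congr_of_eventuallyEq heq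

lemma term_val (a c t E : ℝ) (hc : 0 < c) (ht : 0 < t) (k : ℕ) :
    E * (((a / c) ^ 2 / 4) ^ k *
      (a * ((c * t) ^ (2 * k + 1) *
          (2 * 4 ^ k * ((Nat.factorial k : ℝ)) ^ 2 / (Nat.factorial (2 * k + 1) : ℝ)))
        + (k : ℝ) * (2 * c ^ 2 * t) * ((c * t) ^ (2 * (k - 1) + 1) *
          (2 * 4 ^ (k - 1) * ((Nat.factorial (k - 1) : ℝ)) ^ 2 /
            (Nat.factorial (2 * (k - 1) + 1) : ℝ))))
      / ((Nat.factorial k : ℝ)) ^ 2)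
    = (2 * c * E) * ((a * t) ^ (2 * k) / (Nat.factorial (2 * k) : ℝ))
      + (2 * c * E) * ((a * t) ^ (2 * k + 1) / (Nat.factorial (2 * k + 1) : ℝ))
      - (if k = 0 then 2 * c * E else 0) := by
  have hc' : c ≠ 0 := ne_of_gt hc
  have ht' : t ≠ 0 := ne_of_gt ht
  cases k with
  | zero =>
    simp [Nat.factorial]
    ring
  | succ m =>
    have e1 : 2 * (m + 1) + 1 = 2 * m + 3 := by ring
    have e2 : (m + 1) - 1 = m := rfl
    have e3 : 2 * ((m + 1) - 1) + 1 = 2 * m + 1 := by omega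
    have e4 : 2 * (m + 1) = 2 * m + 2 := by ring
    simp only [e1, e2, e3, e4, Nat.succ_ne_zero, if_false]
    have f1 : (Nat.factorial (2 * m + 3) : ℝ)
        = (2 * m + 3) * ((2 * m + 2) * (Nat.factorial (2 * m + 1) : ℝ)) := by
      rw [show 2 * m + 3 = (2 * m + 2) + 1 from rfl, Nat.factorial_succ,
        show 2 * m + 2 = (2 * m + 1) + 1 from rfl, Nat.factorial_succ]
      push_cast
      ring
    have f2 : (Nat.factorial (2 * m + 2) : ℝ) = (2 * m + 2) * (Nat.factorial (2 * m + 1) : ℝ) := by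
      rw [show 2 * m + 2 = (2 * m + 1) + 1 from rfl, Nat.factorial_succ]
      push_cast
      ring
    have f3 : (Nat.factorial (m + 1) : ℝ) = (m + 1) * (Nat.factorial m : ℝ) := by
      rw [Nat.factorial_succ]
      push_cast
      ring
    have p1 : (0:ℝ) < (Nat.factorial (2 * m + 1) : ℝ) := fact_pos' _
    have p2 : (0:ℝ) < (Nat.factorial m : ℝ) := fact_pos' _
    rw [f1, f2, f3]
    have hpow1 : (c * t) ^ (2 * m + 3) = c ^ (2 * m + 3) * t ^ (2 * m + 3) := mul_pow c t _
    have hpow2 : (c * t) ^ (2 * m + 1) = c ^ (2 * m + 1) * t ^ (2 * m + 1) := mul_pow c t _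
    have hpow3 : (a * t) ^ (2 * m + 2) = a ^ (2 * m + 2) * t ^ (2 * m + 2) := mul_pow a t _
    have hpow4 : (a * t) ^ (2 * m + 3) = a ^ (2 * m + 3) * t ^ (2 * m + 3) := mul_pow a t _
    have hdiv : ((a / c) ^ 2 / 4) ^ (m + 1) = a ^ (2 * (m + 1)) / (c ^ (2 * (m + 1)) * 4 ^ (m + 1)) := by
      rw [div_pow, ← pow_mul, div_pow, div_div]
    rw [hpow1, hpow2, hpow3, hpow4, hdiv, e4]
    have hcpos : (0:ℝ) < c ^ (2 * m + 2) := by positivity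
    field_simp
    push_cast
    ring
theorem diagonal_density_integral
    (lam c p q t K : ℝ) (hlam : 0 < lam) (hc : 0 < c) (hp : 0 < p) (hq : 0 < q)
    (hpq : p + q < 1) (ht : 0 < t) (hK : K = lam * (1 - p - q) / c)
    (g : ℝ → ℝ → ℝ)
    (hg : ∀ x τ, g x τ =
      Real.exp (-lam * τ) / (4 * c) *
        (lam * (1 - p - q) * besselI0 (K * Real.sqrt (c ^ 2 * τ ^ 2 - x ^ 2))
          + deriv (fun σ => besselI0 (K * Real.sqrt (c ^ 2 * σ ^ 2 - x ^ 2))) τ)) :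
    ∫ x in (-(c * t))..(c * t), g x t
      = (Real.exp (-lam * (p + q) * t) - Real.exp (-lam * t)) / 2 := by
  subst hK
  set a : ℝ := lam * (1 - p - q) with ha
  have ha0 : 0 < a := by
    have : 0 < 1 - p - q := by linarith
    exact mul_pos hlam this
  have hc' : c ≠ 0 := ne_of_gt hc
  have ht' : t ≠ 0 := ne_of_gt ht
  set E : ℝ := Real.exp (-lam * t) / (4 * c) with hE
  have hE0 : 0 < E := by
    have := Real.exp_pos (-lam * t)
    positivity
  set f : ℕ → ℝ := fun n => (a * t) ^ n / (Nat.factorial n : ℝ) with hf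
  set F : ℕ → ℝ → ℝ := fun k x =>
    E * (((a / c) ^ 2 / 4) ^ k *
      (a * (c ^ 2 * t ^ 2 - x ^ 2) ^ k
        + (k : ℝ) * (c ^ 2 * t ^ 2 - x ^ 2) ^ (k - 1) * (2 * c ^ 2 * t)) /
      ((Nat.factorial k : ℝ)) ^ 2) with hF
  -- pointwise identity on the open interval
  have hpt : ∀ x ∈ Ioo (-(c * t)) (c * t), g x t = ∑' k, F k x := by
    intro x hx
    have hx' : |x| < c * t := abs_lt.2 ⟨by linarith [hx.1], hx.2⟩
    have hv : 0 ≤ c ^ 2 * t ^ 2 - x ^ 2 := by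
      have h2 : x ^ 2 < (c * t) ^ 2 := sq_lt_sq' (by linarith [hx.1]) hx.2
      have h3 : (c * t) ^ 2 = c ^ 2 * t ^ 2 := mul_pow c t 2
      linarith
    have SA : Summable (fun k : ℕ =>
        ((a / c) ^ 2 / 4) ^ k * (c ^ 2 * t ^ 2 - x ^ 2) ^ k / ((Nat.factorial k : ℝ)) ^ 2) := by
      refine (summable0 (((a / c) ^ 2 / 4) * (c ^ 2 * t ^ 2 - x ^ 2)) ?_).congr fun k => ?_
      · positivity
      · rw [mul_pow]
    have SB : Summable (fun k : ℕ =>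
        ((a / c) ^ 2 / 4) ^ k * ((k : ℝ) * (c ^ 2 * t ^ 2 - x ^ 2) ^ (k - 1) * (2 * c ^ 2 * t)) /
          ((Nat.factorial k : ℝ)) ^ 2) :=
      summable2 _ _ _ (by positivity) hv
    rw [hg x t, besselI0_sqrt _ _ hv,
      (deriv_bessel (a / c) c t x hc ht hx').deriv, ← tsum_mul_left,
      ← Summable.tsum_add (SA.mul_left a) SB, ← tsum_mul_left]
    exact tsum_congr fun k => by rw [hF, hE]; ring
  -- continuity and integrability of each term
  have hcont : ∀ k, Continuous (F k) := by
    intro k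
    rw [hF]
    fun_prop
  have hFint : ∀ k, IntegrableOn (F k) (Ioo (-(c * t)) (c * t)) := fun k =>
    ((hcont k).integrableOn_Icc).mono_set Ioo_subset_Icc_self
  -- uniform bound and summability of the integrals of norms
  set M : ℕ → ℝ := fun k =>
    E * (((a / c) ^ 2 / 4) ^ k *
      (a * (c ^ 2 * t ^ 2) ^ k + (k : ℝ) * (c ^ 2 * t ^ 2) ^ (k - 1) * (2 * c ^ 2 * t)) /
      ((Nat.factorial k : ℝ)) ^ 2) with hM
  have hFle : ∀ k, ∀ x ∈ Ioo (-(c * t)) (c * t), ‖F k x‖ ≤ M k := by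
    intro k x hx
    have hv : 0 ≤ c ^ 2 * t ^ 2 - x ^ 2 := by
      have h2 : x ^ 2 < (c * t) ^ 2 := sq_lt_sq' (by linarith [hx.1]) hx.2
      have h3 : (c * t) ^ 2 = c ^ 2 * t ^ 2 := mul_pow c t 2
      linarith
    have hv2 : c ^ 2 * t ^ 2 - x ^ 2 ≤ c ^ 2 * t ^ 2 := by nlinarith [sq_nonneg x]
    have h0 : 0 ≤ F k x := by
      rw [hF]
      have h1 : (0:ℝ) ≤ (k : ℝ) := Nat.cast_nonneg k
      positivity
    have hcore : a * (c ^ 2 * t ^ 2 - x ^ 2) ^ k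
          + (k : ℝ) * (c ^ 2 * t ^ 2 - x ^ 2) ^ (k - 1) * (2 * c ^ 2 * t)
        ≤ a * (c ^ 2 * t ^ 2) ^ k + (k : ℝ) * (c ^ 2 * t ^ 2) ^ (k - 1) * (2 * c ^ 2 * t) := by
      have h1 := pow_le_pow_left₀ hv hv2 k
      have h2 := pow_le_pow_left₀ hv hv2 (k - 1)
      have hk : (0:ℝ) ≤ (k : ℝ) := Nat.cast_nonneg k
      exact add_le_add (mul_le_mul_of_nonneg_left h1 ha0.le)
        (mul_le_mul_of_nonneg_right (mul_le_mul_of_nonneg_left h2 hk) (by positivity))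
    rw [Real.norm_of_nonneg h0, hF, hM]
    simp only
    rw [div_eq_mul_inv, div_eq_mul_inv]
    exact mul_le_mul_of_nonneg_left
      (mul_le_mul_of_nonneg_right
        (mul_le_mul_of_nonneg_left hcore (by positivity)) (by positivity)) hE0.le
  have hMsum : Summable (fun k => M k * (2 * (c * t))) := by
    have S1 : Summable (fun k : ℕ =>
        ((a / c) ^ 2 / 4) ^ k * (c ^ 2 * t ^ 2) ^ k / ((Nat.factorial k : ℝ)) ^ 2) := by
      refine (summable0 (((a / c) ^ 2 / 4) * (c ^ 2 * t ^ 2)) (by positivity)).congr fun k => ?_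
      rw [mul_pow]
    have S2 : Summable (fun k : ℕ =>
        ((a / c) ^ 2 / 4) ^ k * ((k : ℝ) * (c ^ 2 * t ^ 2) ^ (k - 1) * (2 * c ^ 2 * t)) /
          ((Nat.factorial k : ℝ)) ^ 2) :=
      summable2 _ _ _ (by positivity) (by positivity)
    refine (((S1.mul_left (2 * (c * t) * E * a)).add
      (S2.mul_left (2 * (c * t) * E))).congr fun k => ?_)
    rw [hM]
    ring
  have hInorm : Summable (fun k => ∫ x in Ioo (-(c * t)) (c * t), ‖F k x‖) := by
    refine Summable.of_nonneg_of_le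
      (fun k => integral_nonneg fun x => norm_nonneg _) (fun k => ?_) hMsum
    calc ∫ x in Ioo (-(c * t)) (c * t), ‖F k x‖
        ≤ ∫ _x in Ioo (-(c * t)) (c * t), M k :=
          setIntegral_mono_on ((hFint k).norm)
            (integrableOn_const measure_Ioo_lt_top.ne) measurableSet_Ioo
            (fun x hx => hFle k x hx)
      _ = M k * (2 * (c * t)) := by
          rw [setIntegral_const, measureReal_def, Real.volume_Ioo, smul_eq_mul,
            ENNReal.toReal_ofReal (by nlinarith [mul_pos hc ht] : (0:ℝ) ≤ c * t - -(c * t))]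
          ring
  -- value of each term integral
  have hIval : ∀ k, ∫ x in Ioo (-(c * t)) (c * t), F k x
      = (2 * c * E) * f (2 * k) + (2 * c * E) * f (2 * k + 1)
        - (if k = 0 then 2 * c * E else 0) := by
    intro k
    have hle : -(c * t) ≤ c * t := by nlinarith [mul_pos hc ht]
    rw [← integral_Ioc_eq_integral_Ioo, ← intervalIntegral.integral_of_le hle]
    have hsplit : ∀ x : ℝ, F k x
        = (E * ((a / c) ^ 2 / 4) ^ k * a / ((Nat.factorial k : ℝ)) ^ 2) *
            (c ^ 2 * t ^ 2 - x ^ 2) ^ k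
          + (E * ((a / c) ^ 2 / 4) ^ k * ((k : ℝ) * (2 * c ^ 2 * t)) /
              ((Nat.factorial k : ℝ)) ^ 2) * (c ^ 2 * t ^ 2 - x ^ 2) ^ (k - 1) := by
      intro x
      rw [hF]
      ring
    simp_rw [hsplit]
    rw [intervalIntegral.integral_add
      (((by fun_prop : Continuous fun x : ℝ => (E * ((a / c) ^ 2 / 4) ^ k * a /
          ((Nat.factorial k : ℝ)) ^ 2) * (c ^ 2 * t ^ 2 - x ^ 2) ^ k)).intervalIntegrable _ _)
      (((by fun_prop : Continuous fun x : ℝ => (E * ((a / c) ^ 2 / 4) ^ k *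
          ((k : ℝ) * (2 * c ^ 2 * t)) / ((Nat.factorial k : ℝ)) ^ 2) *
          (c ^ 2 * t ^ 2 - x ^ 2) ^ (k - 1))).intervalIntegrable _ _),
      intervalIntegral.integral_const_mul, intervalIntegral.integral_const_mul]
    have hb : 0 < c * t := by positivity
    have J1 := integral_sq_sub_sq_pow (c * t) hb k
    have J2 := integral_sq_sub_sq_pow (c * t) hb (k - 1)
    rw [show ((c * t) ^ 2 : ℝ) = c ^ 2 * t ^ 2 from mul_pow c t 2] at J1 J2
    rw [J1, J2]
    refine Eq.trans (by ring) (term_val a c t E hc ht k)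
  -- summing the series
  have Sf : Summable f := Real.summable_pow_div_factorial (a * t)
  have Se : Summable (fun k => f (2 * k)) :=
    Sf.comp_injective fun x y h => by omega
  have So : Summable (fun k => f (2 * k + 1)) :=
    Sf.comp_injective fun x y h => by omega
  have hexp : ∑' n : ℕ, f n = Real.exp (a * t) := by
    rw [hf, Real.exp_eq_exp_ℝ, NormedSpace.exp_eq_tsum_div]
  have hle : -(c * t) ≤ c * t := by nlinarith [mul_pos hc ht]
  rw [intervalIntegral.integral_of_le hle, integral_Ioc_eq_integral_Ioo,
    setIntegral_congr_fun measurableSet_Ioo hpt,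
    ← integral_tsum_of_summable_integral_norm hFint hInorm,
    tsum_congr hIval,
    Summable.tsum_sub (((Se.mul_left (2 * c * E)).add (So.mul_left (2 * c * E))))
      (summable_of_ne_finset_zero (s := {0}) fun b hb => if_neg (by simpa using hb)),
    tsum_ite_eq,
    Summable.tsum_add (Se.mul_left (2 * c * E)) (So.mul_left (2 * c * E)),
    tsum_mul_left, tsum_mul_left,
    show (2 * c * E) * ∑' k, f (2 * k) + (2 * c * E) * ∑' k, f (2 * k + 1)
        = (2 * c * E) * (∑' k, f (2 * k) + ∑' k, f (2 * k + 1)) from by ring,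
    tsum_even_add_odd Se So, hexp]
  have hmul : Real.exp (-lam * t) * Real.exp (a * t) = Real.exp (-lam * (p + q) * t) := by
    rw [← Real.exp_add]
    congr 1
    rw [ha]
    ring
  have h2cE : 2 * c * E = Real.exp (-lam * t) / 2 := by
    rw [hE]
    field_simp
    ring
  rw [h2cE, div_mul_eq_mul_div, hmul]
  ring
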